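/- arXiv:1712.08423 — 3 statements merged into one kernel-verified Lean document; each statement's English description precedes it below -/
import Mathlib

section
/- The largest eigenvalue of the Hermitian matrix ρ_{Φ⁺,Ω} is λ_max(ρ_{Φ⁺,Ω}) = (1 + Σ_{i=1}^{d-1} x_i²)/d. -/
/-!
Writing `ψₘ = (I ⊗ Aₘ)|Φ⁺⟩`, the output state is `ρ = Σₘ ψₘψₘ*`, and the Gram matrix of the
`ψₘ` is `⟨ψₘ, ψₘ'⟩ = tr(Aₘ†Aₘ')/d`. The Kraus operators of `Ω` are orthogonal for this
Hilbert–Schmidt pairing, so `ρψₖ = ‖ψₖ‖²ψₖ`; conversely, pairing `ρu = μu` with each `ψₖ` shows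
that an eigenvalue `μ ≠ 0` equals some `‖ψₖ‖²`. Hence the largest eigenvalue is
`maxₘ ‖ψₘ‖² = ‖ψ₀‖² = (1 + Σ_{i ≥ 1} xᵢ²)/d`, since `‖ψₘ‖² = (1 - xₘ²)/d` for `m ≥ 1`.
-/

open Matrix Kronecker BigOperators Finset

noncomputable section

/-- The maximally entangled state `|Φ⁺⟩ = (1/√d) Σᵢ |i⟩⊗|i⟩`. -/
def phiPlus (d : ℕ) : Fin d × Fin d → ℂ :=
  fun p => if p.1 = p.2 then ((Real.sqrt d)⁻¹ : ℝ) else 0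

/-- Kraus operators of the channel Ω. -/
def krausA (d : ℕ) [NeZero d] (x : Fin d → ℝ) : Fin d → Matrix (Fin d) (Fin d) ℂ :=
  fun m => if m = 0 then Matrix.diagonal (fun i => (x i : ℂ))
    else Matrix.of (fun i j => if i = 0 ∧ j = m then ((Real.sqrt (1 - (x m) ^ 2) : ℝ) : ℂ) else 0)

/-- The output state `ρ_{ψ,Λ} = Σₘ (I ⊗ Kₘ)|ψ⟩⟨ψ|(I ⊗ Kₘ†)`. -/
def outChannel (d : ℕ) {ι : Type*} [Fintype ι] (K : ι → Matrix (Fin d) (Fin d) ℂ)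
    (ψ : Fin d × Fin d → ℂ) : Matrix (Fin d × Fin d) (Fin d × Fin d) ℂ :=
  ∑ m, ((1 : Matrix (Fin d) (Fin d) ℂ) ⊗ₖ K m) * Matrix.vecMulVec ψ (star ψ) *
    ((1 : Matrix (Fin d) (Fin d) ℂ) ⊗ₖ (K m)ᴴ)

end

section OrthogonalRankOne

variable {𝕜 n ι : Type*} [RCLike 𝕜] [Fintype n] [Fintype ι] {ψ : ι → n → 𝕜}

theorem sum_vecMulVec_mulVec (u : n → 𝕜) :
    (∑ m, vecMulVec (ψ m) (star (ψ m))) *ᵥ u = ∑ m, (star (ψ m) ⬝ᵥ u) • ψ m := by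
  simp [sum_mulVec, vecMulVec_mulVec]

theorem sum_vecMulVec_mulVec_of_pairwise
    (horth : Pairwise fun m m' => star (ψ m) ⬝ᵥ ψ m' = 0) (k : ι) :
    (∑ m, vecMulVec (ψ m) (star (ψ m))) *ᵥ ψ k = (star (ψ k) ⬝ᵥ ψ k) • ψ k := by
  rw [sum_vecMulVec_mulVec, Finset.sum_eq_single k (fun m _ hm => by simp [horth hm])
    (by simp)]

theorem dotProduct_sum_vecMulVec_mulVec_of_pairwise
    (horth : Pairwise fun m m' => star (ψ m) ⬝ᵥ ψ m' = 0) (k : ι) (u : n → 𝕜) :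
    star (ψ k) ⬝ᵥ (∑ m, vecMulVec (ψ m) (star (ψ m))) *ᵥ u
      = (star (ψ k) ⬝ᵥ ψ k) * (star (ψ k) ⬝ᵥ u) := by
  rw [sum_vecMulVec_mulVec, dotProduct_sum, Finset.sum_eq_single k
    (fun m _ hm => by simp [horth hm.symm]) (by simp), dotProduct_smul, smul_eq_mul, mul_comm]

theorem eq_zero_or_exists_eq_dotProduct_of_mulVec_eq_smul
    (horth : Pairwise fun m m' => star (ψ m) ⬝ᵥ ψ m' = 0) {u : n → 𝕜} (hu : u ≠ 0) {μ : 𝕜}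
    (h : (∑ m, vecMulVec (ψ m) (star (ψ m))) *ᵥ u = μ • u) :
    μ = 0 ∨ ∃ m, μ = star (ψ m) ⬝ᵥ ψ m := by
  by_contra! hμ
  obtain ⟨hμ0, hμψ⟩ := hμ
  have hcoef (m : ι) : star (ψ m) ⬝ᵥ u = 0 := by
    have hm := dotProduct_sum_vecMulVec_mulVec_of_pairwise horth m u
    rw [h, dotProduct_smul, smul_eq_mul] at hm
    exact (mul_eq_zero.mp (by linear_combination hm)).resolve_left (sub_ne_zero.mpr (hμψ m))
  have : μ • u = 0 := by simp [← h, sum_vecMulVec_mulVec, hcoef]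
  exact hu ((smul_eq_zero.mp this).resolve_left hμ0)

variable [DecidableEq n]

theorem Matrix.IsHermitian.exists_eigenvalues_eq {A : Matrix n n 𝕜} (hA : A.IsHermitian)
    {v : n → 𝕜} (hv : v ≠ 0) {μ : ℝ} (h : A *ᵥ v = (μ : 𝕜) • v) : ∃ j, hA.eigenvalues j = μ := by
  have hμ : (μ : 𝕜) ∈ spectrum 𝕜 A := by
    rw [← spectrum_toLin', ← Module.End.hasEigenvalue_iff_mem_spectrum]
    exact Module.End.hasEigenvalue_of_hasEigenvector
      ⟨Module.End.mem_eigenspace_iff.mpr (by simpa using h), hv⟩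
  rw [hA.spectrum_eq_image_range] at hμ
  obtain ⟨_, ⟨j, rfl⟩, hj⟩ := hμ
  exact ⟨j, RCLike.ofReal_injective hj⟩

theorem Matrix.IsHermitian.iSup_eigenvalues_eq_of_pairwise {A : Matrix n n 𝕜}
    (hA : A.IsHermitian) (hAψ : A = ∑ m, vecMulVec (ψ m) (star (ψ m)))
    (horth : Pairwise fun m m' => star (ψ m) ⬝ᵥ ψ m' = 0) {k : ι} {c : ℝ} (hc0 : 0 < c)
    (hck : star (ψ k) ⬝ᵥ ψ k = c) (hc : ∀ m, RCLike.re (star (ψ m) ⬝ᵥ ψ m) ≤ c) :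
    ⨆ j, hA.eigenvalues j = c := by
  subst hAψ
  have hk : ψ k ≠ 0 := fun h => hc0.ne' (by simpa [h] using hck.symm)
  obtain ⟨j₀, hj₀⟩ :=
    hA.exists_eigenvalues_eq hk (by rw [sum_vecMulVec_mulVec_of_pairwise horth, hck])
  have : Nonempty n := ⟨j₀⟩
  refine le_antisymm (ciSup_le fun j => ?_) (hj₀ ▸ le_ciSup (Set.finite_range _).bddAbove j₀)
  have hj := hA.mulVec_eigenvectorBasis j
  rw [RCLike.real_smul_eq_coe_smul (K := 𝕜)] at hj
  rcases eq_zero_or_exists_eq_dotProduct_of_mulVec_eq_smul horth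
    ((WithLp.ofLp_eq_zero 2).ne.2 (hA.eigenvectorBasis.orthonormal.ne_zero j)) hj with h | ⟨m, hm⟩
  · exact (RCLike.ofReal_eq_zero.mp h).trans_le hc0.le
  · simpa [← hm] using hc m

end OrthogonalRankOne

theorem outChannel_eq_sum_vecMulVec (d : ℕ) {ι : Type*} [Fintype ι]
    (K : ι → Matrix (Fin d) (Fin d) ℂ) (ψ : Fin d × Fin d → ℂ) :
    outChannel d K ψ = ∑ m, vecMulVec (((1 : Matrix (Fin d) (Fin d) ℂ) ⊗ₖ K m) *ᵥ ψ)
      (star (((1 : Matrix (Fin d) (Fin d) ℂ) ⊗ₖ K m) *ᵥ ψ)) := by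
  refine Finset.sum_congr rfl fun m _ => ?_
  rw [mul_vecMulVec, vecMulVec_mul, star_mulVec, conjTranspose_kronecker, conjTranspose_one]

theorem Matrix.trace_conjTranspose_mul_eq_sum {R m n : Type*} [NonUnitalNonAssocSemiring R]
    [Star R] [Fintype m] [Fintype n] (K L : Matrix m n R) :
    trace (Kᴴ * L) = ∑ i, ∑ j, star (K i j) * L i j := by
  simp only [trace, Matrix.diag, mul_apply, conjTranspose_apply]
  exact Finset.sum_comm

theorem one_kronecker_mulVec_phiPlus_apply {d : ℕ} (K : Matrix (Fin d) (Fin d) ℂ)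
    (p : Fin d × Fin d) :
    (((1 : Matrix (Fin d) (Fin d) ℂ) ⊗ₖ K) *ᵥ phiPlus d) p
      = ((Real.sqrt d)⁻¹ : ℝ) * K p.2 p.1 := by
  simp [mulVec, dotProduct, Fintype.sum_prod_type, one_apply, phiPlus, mul_comm]

theorem star_one_kronecker_mulVec_phiPlus_dotProduct {d : ℕ} (K L : Matrix (Fin d) (Fin d) ℂ) :
    star (((1 : Matrix (Fin d) (Fin d) ℂ) ⊗ₖ K) *ᵥ phiPlus d)
      ⬝ᵥ (((1 : Matrix (Fin d) (Fin d) ℂ) ⊗ₖ L) *ᵥ phiPlus d) = (d : ℂ)⁻¹ * trace (Kᴴ * L) := by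
  have hsqrt : (((Real.sqrt d)⁻¹ : ℝ) : ℂ) * (((Real.sqrt d)⁻¹ : ℝ) : ℂ) = (d : ℂ)⁻¹ := by
    rw [← Complex.ofReal_mul, ← mul_inv, Real.mul_self_sqrt d.cast_nonneg]; push_cast; rfl
  simp only [dotProduct, Pi.star_apply, one_kronecker_mulVec_phiPlus_apply, Fintype.sum_prod_type,
    trace_conjTranspose_mul_eq_sum, star_mul', Complex.star_def, Complex.conj_ofReal,
    Finset.mul_sum, ← hsqrt]
  rw [Finset.sum_comm]
  exact Finset.sum_congr rfl fun i _ => Finset.sum_congr rfl fun j _ => by ring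

section Kraus

variable {d : ℕ} [NeZero d] (x : Fin d → ℝ)

theorem trace_conjTranspose_krausA_zero_mul_self :
    trace ((krausA d x 0)ᴴ * krausA d x 0) = ∑ i, ((x i ^ 2 : ℝ) : ℂ) := by
  simp [krausA, trace, sq]

theorem trace_conjTranspose_krausA_mul_self {m : Fin d} (hm : m ≠ 0) (hxm : x m ^ 2 ≤ 1) :
    trace ((krausA d x m)ᴴ * krausA d x m) = ((1 - x m ^ 2 : ℝ) : ℂ) := by
  simp [krausA, hm, trace, mul_apply, ite_and, ← Complex.ofReal_mul,
    Real.mul_self_sqrt (sub_nonneg.mpr hxm)]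

theorem trace_conjTranspose_krausA_mul_krausA {m m' : Fin d} (h : m ≠ m') :
    trace ((krausA d x m)ᴴ * krausA d x m') = 0 := by
  rcases eq_or_ne m 0 with rfl | hm <;> rcases eq_or_ne m' 0 with rfl | hm'
  · exact absurd rfl h
  all_goals
    rw [trace_conjTranspose_mul_eq_sum]
    refine Finset.sum_eq_zero fun i _ => Finset.sum_eq_zero fun j _ => ?_
    simp only [krausA, diagonal_apply, of_apply, *, if_false, if_true]
    split_ifs <;> grind [star_zero]

end Kraus

theorem largest_eigenvalue_output_general (d : ℕ) [NeZero d] (x : Fin d → ℝ)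
    (hx0 : x 0 = 1) (hx : ∀ i : Fin d, i ≠ 0 → 0 < x i ∧ x i < 1)
    (hH : (outChannel d (krausA d x) (phiPlus d)).IsHermitian) :
    (⨆ p : Fin d × Fin d, hH.eigenvalues p)
      = (1 + ∑ i ∈ Finset.univ.erase (0 : Fin d), (x i) ^ 2) / d := by
  set ψ : Fin d → Fin d × Fin d → ℂ :=
    fun m => ((1 : Matrix (Fin d) (Fin d) ℂ) ⊗ₖ krausA d x m) *ᵥ phiPlus d
  have hψ (m m' : Fin d) :
      star (ψ m) ⬝ᵥ ψ m' = (d : ℂ)⁻¹ * trace ((krausA d x m)ᴴ * krausA d x m') :=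
    star_one_kronecker_mulVec_phiPlus_dotProduct _ _
  have hψ0 : star (ψ 0) ⬝ᵥ ψ 0
      = (((1 + ∑ i ∈ Finset.univ.erase (0 : Fin d), x i ^ 2) / d : ℝ) : ℂ) := by
    rw [hψ, trace_conjTranspose_krausA_zero_mul_self, ← Finset.add_sum_erase _ _ (mem_univ 0),
      hx0]
    push_cast
    ring
  refine hH.iSup_eigenvalues_eq_of_pairwise (ψ := ψ) (outChannel_eq_sum_vecMulVec d _ _)
    (fun m m' h => (hψ m m').trans (by rw [trace_conjTranspose_krausA_mul_krausA x h, mul_zero]))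
    (div_pos (by positivity) (Nat.cast_pos.mpr (NeZero.pos d))) hψ0 fun m => ?_
  rcases eq_or_ne m 0 with rfl | hm
  · rw [hψ0, RCLike.re_to_complex, Complex.ofReal_re]
  obtain ⟨hxm0, hxm1⟩ := hx m hm
  rw [hψ, trace_conjTranspose_krausA_mul_self x hm (pow_le_one₀ hxm0.le hxm1.le),
    ← Complex.ofReal_natCast, ← Complex.ofReal_inv, ← Complex.ofReal_mul, RCLike.re_to_complex,
    Complex.ofReal_re, inv_mul_eq_div]
  gcongr
  linarith [sq_nonneg (x m), Finset.sum_nonneg fun i (_ : i ∈ univ.erase 0) => sq_nonneg (x i)]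

/-- the largest eigenvalue of the Hermitian matrix `ρ_{Φ⁺,Ω}` is
`(1 + Σ_{i=1}^{d-1} xᵢ²)/d`. -/
theorem largest_eigenvalue_output (d : ℕ) [NeZero d] (hd : 3 ≤ d) (x : Fin d → ℝ)
    (hx0 : x 0 = 1) (hx : ∀ i : Fin d, i ≠ 0 → 0 < x i ∧ x i < 1)
    (hH : (outChannel d (krausA d x) (phiPlus d)).IsHermitian) :
    (⨆ p : Fin d × Fin d, hH.eigenvalues p)
      = (1 + ∑ i ∈ Finset.univ.erase (0 : Fin d), (x i) ^ 2) / d :=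
  largest_eigenvalue_output_general d x hx0 hx hH
end

section
/- For any quantum channel Λ on ℂ^d given by Kraus operators {K_i}, the supremum over all unit vectors |ψ⟩ ∈ ℂ^d ⊗ ℂ^d and all d×d unitaries W of ⟨(W ⊗ I)Φ⁺| ρ_{ψ,Λ} |(W ⊗ I)Φ⁺⟩ equals λ_max(ρ_{Φ⁺,Λ̂}), the largest eigenvalue of ρ_{Φ⁺,Λ̂}, and this supremum is attained. -/
open Matrix Kronecker BigOperators Finset

/-!
Write `⟨χ|ρ_{ψ,Λ}|χ⟩ = Σᵢ |⟨(I ⊗ Kᵢ)ψ, χ⟩|²`. Since `W ⊗ I` and `I ⊗ Kᵢ` act on different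
tensor factors, both can be moved across the inner product, which turns each term for
`χ = (W ⊗ I)Φ⁺` into the corresponding term of `⟨ψ'|ρ_{Φ⁺,Λ̂}|ψ'⟩` with `ψ' = (W† ⊗ I)ψ`, again a
unit vector. So every fidelity is a Rayleigh quotient of `ρ_{Φ⁺,Λ̂}`, hence at most its largest
eigenvalue, and `W = I` with `ψ` a top eigenvector attains it.
-/

open scoped MatrixOrder

namespace Matrix

section StarRing

variable {R : Type*} [CommRing R] [StarRing R] {l m n : Type*} [Fintype n]

lemma mul_vecMulVec_star_mul_conjTranspose (M : Matrix m n R) (x : n → R) :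
    M * vecMulVec x (star x) * Mᴴ = vecMulVec (M *ᵥ x) (star (M *ᵥ x)) := by
  rw [mul_vecMulVec, vecMulVec_mul, star_mulVec]

lemma star_dotProduct_vecMulVec_star_mulVec (a v : n → R) :
    star v ⬝ᵥ vecMulVec a (star a) *ᵥ v = star (star a ⬝ᵥ v) * (star a ⬝ᵥ v) := by
  rw [vecMulVec_mulVec, dotProduct_smul, star_dotProduct, star_star, op_smul_eq_mul, mul_comm]

variable [Fintype l] [Fintype m]

lemma star_mulVec_dotProduct_mulVec (M : Matrix m n R) (N : Matrix m l R) (x : n → R)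
    (y : l → R) : star (M *ᵥ x) ⬝ᵥ N *ᵥ y = star x ⬝ᵥ (Mᴴ * N) *ᵥ y := by
  rw [star_mulVec, ← dotProduct_mulVec, mulVec_mulVec]

lemma star_mulVec_dotProduct_mulVec_self_of_mem_unitary [DecidableEq n] {U : Matrix n n R}
    (hU : U ∈ unitaryGroup n R) (x : n → R) : star (U *ᵥ x) ⬝ᵥ U *ᵥ x = star x ⬝ᵥ x := by
  rw [star_mulVec_dotProduct_mulVec, ← star_eq_conjTranspose,
    Unitary.star_mul_self_of_mem hU, one_mulVec]

lemma star_one_kronecker_mulVec_dotProduct [DecidableEq l] [DecidableEq m]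
    (A : Matrix l l R) (B : Matrix m m R) (x y : l × m → R) :
    star ((1 ⊗ₖ B) *ᵥ x) ⬝ᵥ (A ⊗ₖ 1) *ᵥ y = star ((Aᴴ ⊗ₖ 1) *ᵥ x) ⬝ᵥ (1 ⊗ₖ Bᴴ) *ᵥ y := by
  simp only [star_mulVec_dotProduct_mulVec, conjTranspose_kronecker, conjTranspose_one,
    conjTranspose_conjTranspose, ← mul_kronecker_mul, one_mul, mul_one]

end StarRing

namespace IsHermitian

variable {𝕜 : Type*} [RCLike 𝕜] {n : Type*} [Fintype n] [DecidableEq n] {A : Matrix n n 𝕜}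

lemma le_algebraMap_iSup_eigenvalues (hA : A.IsHermitian) :
    A ≤ algebraMap ℝ (Matrix n n 𝕜) (⨆ p, hA.eigenvalues p) := by
  refine le_algebraMap_of_spectrum_le fun x hx => ?_
  obtain ⟨p, rfl⟩ := hA.spectrum_real_eq_range_eigenvalues ▸ hx
  exact le_ciSup (Set.finite_range _).bddAbove p

lemma star_eigenvectorBasis_dotProduct_self (hA : A.IsHermitian) (p : n) :
    star ⇑(hA.eigenvectorBasis p) ⬝ᵥ ⇑(hA.eigenvectorBasis p) = 1 := by
  rw [dotProduct_comm, ← EuclideanSpace.inner_eq_star_dotProduct, inner_self_eq_norm_sq_to_K,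
    hA.eigenvectorBasis.orthonormal.1 p]
  simp

theorem isGreatest_re_star_dotProduct_mulVec [Nonempty n] (hA : A.IsHermitian) :
    IsGreatest {r : ℝ | ∃ φ : n → 𝕜, star φ ⬝ᵥ φ = 1 ∧ r = RCLike.re (star φ ⬝ᵥ A *ᵥ φ)}
      (⨆ p, hA.eigenvalues p) := by
  obtain ⟨p, hp⟩ := Finite.exists_max hA.eigenvalues
  refine ⟨⟨_, hA.star_eigenvectorBasis_dotProduct_self p, ?_⟩, ?_⟩
  · rw [← hA.eigenvalues_eq p]
    exact le_antisymm (ciSup_le hp) (le_ciSup (Set.finite_range _).bddAbove p)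
  · rintro r ⟨φ, hφ, rfl⟩
    have := (le_iff.mp hA.le_algebraMap_iSup_eigenvalues).re_dotProduct_nonneg φ
    simpa [sub_mulVec, dotProduct_sub, Algebra.algebraMap_eq_smul_one, smul_mulVec, hφ,
      RCLike.smul_re] using this

end IsHermitian

end Matrix

section Channel

open Matrix

variable {d : ℕ} {ι : Type*} [Fintype ι]

lemma star_dotProduct_outChannel_mulVec (K : ι → Matrix (Fin d) (Fin d) ℂ)
    (ψ v : Fin d × Fin d → ℂ) :
    star v ⬝ᵥ outChannel d K ψ *ᵥ v =
      ∑ i, star (star ((1 ⊗ₖ K i) *ᵥ ψ) ⬝ᵥ v) * (star ((1 ⊗ₖ K i) *ᵥ ψ) ⬝ᵥ v) := by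
  have hK (i : ι) : (1 : Matrix (Fin d) (Fin d) ℂ) ⊗ₖ (K i)ᴴ = (1 ⊗ₖ K i)ᴴ := by
    rw [conjTranspose_kronecker, conjTranspose_one]
  simp only [outChannel, hK, mul_vecMulVec_star_mul_conjTranspose, sum_mulVec, dotProduct_sum,
    star_dotProduct_vecMulVec_star_mulVec]

lemma outChannel_fidelity_eq_dual (K : ι → Matrix (Fin d) (Fin d) ℂ)
    (W : Matrix (Fin d) (Fin d) ℂ) (φ ψ : Fin d × Fin d → ℂ) :
    star ((W ⊗ₖ 1) *ᵥ φ) ⬝ᵥ outChannel d K ψ *ᵥ ((W ⊗ₖ 1) *ᵥ φ) =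
      star ((Wᴴ ⊗ₖ 1) *ᵥ ψ) ⬝ᵥ outChannel d (fun i => (K i)ᴴ) φ *ᵥ ((Wᴴ ⊗ₖ 1) *ᵥ ψ) := by
  rw [star_dotProduct_outChannel_mulVec, star_dotProduct_outChannel_mulVec]
  refine Finset.sum_congr rfl fun i _ => ?_
  rw [star_one_kronecker_mulVec_dotProduct, star_dotProduct ((1 ⊗ₖ (K i)ᴴ) *ᵥ φ), star_star,
    mul_comm]

end Channel

theorem max_fidelity_eq_lambda_max_dual_general (d : ℕ) (hd : 2 ≤ d) {ι : Type*} [Fintype ι]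
    (K : ι → Matrix (Fin d) (Fin d) ℂ)
    (hDual : (outChannel d (fun i => (K i)ᴴ) (phiPlus d)).IsHermitian) :
    IsGreatest
      {r : ℝ | ∃ ψ : Fin d × Fin d → ℂ, ∃ W : Matrix (Fin d) (Fin d) ℂ,
        star ψ ⬝ᵥ ψ = 1 ∧ W ∈ Matrix.unitaryGroup (Fin d) ℂ ∧
        r = (star ((W ⊗ₖ (1 : Matrix (Fin d) (Fin d) ℂ)).mulVec (phiPlus d)) ⬝ᵥ
              (outChannel d K ψ).mulVec
                ((W ⊗ₖ (1 : Matrix (Fin d) (Fin d) ℂ)).mulVec (phiPlus d))).re}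
      (⨆ p : Fin d × Fin d, hDual.eigenvalues p) := by
  have : Nonempty (Fin d × Fin d) := ⟨(⟨0, by omega⟩, ⟨0, by omega⟩)⟩
  obtain ⟨⟨φ, hφ, hφ_max⟩, h_bound⟩ := hDual.isGreatest_re_star_dotProduct_mulVec
  refine ⟨⟨φ, 1, hφ, one_mem _, ?_⟩, ?_⟩
  · rw [outChannel_fidelity_eq_dual, conjTranspose_one, one_kronecker_one, one_mulVec]
    exact hφ_max
  · rintro r ⟨ψ, W, hψ, hW, rfl⟩
    rw [outChannel_fidelity_eq_dual]
    have hW' : Wᴴ ⊗ₖ 1 ∈ unitaryGroup (Fin d × Fin d) ℂ :=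
      kronecker_mem_unitary (Unitary.star_mem hW) (one_mem _)
    exact h_bound ⟨_, (star_mulVec_dotProduct_mulVec_self_of_mem_unitary hW' ψ).trans hψ, rfl⟩

/-- the supremum over all unit vectors `ψ` and unitaries `W` of
`⟨(W ⊗ I)Φ⁺| ρ_{ψ,Λ} |(W ⊗ I)Φ⁺⟩` equals `λ_max(ρ_{Φ⁺,Λ̂})`, and it is attained. -/
theorem max_fidelity_eq_lambda_max_dual (d : ℕ) (hd : 2 ≤ d) {ι : Type*} [Fintype ι]
    (K : ι → Matrix (Fin d) (Fin d) ℂ) (hK : ∑ i, (K i)ᴴ * K i = 1)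
    (hDual : (outChannel d (fun i => (K i)ᴴ) (phiPlus d)).IsHermitian) :
    IsGreatest
      {r : ℝ | ∃ ψ : Fin d × Fin d → ℂ, ∃ W : Matrix (Fin d) (Fin d) ℂ,
        star ψ ⬝ᵥ ψ = 1 ∧ W ∈ Matrix.unitaryGroup (Fin d) ℂ ∧
        r = (star ((W ⊗ₖ (1 : Matrix (Fin d) (Fin d) ℂ)).mulVec (phiPlus d)) ⬝ᵥ
              (outChannel d K ψ).mulVec
                ((W ⊗ₖ (1 : Matrix (Fin d) (Fin d) ℂ)).mulVec (phiPlus d))).re}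
      (⨆ p : Fin d × Fin d, hDual.eigenvalues p) :=
  max_fidelity_eq_lambda_max_dual_general d hd K hDual
end

section
/- (Lemma 4, quantitative form) For the unit vector |ψ'⟩ = (|00⟩ + Σ_{i=1}^{d-1} x_i |ii⟩)/√(1 + Σ_{i=1}^{d-1} x_i²), the singlet fraction of ρ_{ψ',Ω} equals the largest eigenvalue of ρ_{Φ⁺,Ω}: sup over d×d unitaries W of ⟨(W ⊗ I)Φ⁺| ρ_{ψ',Ω} |(W ⊗ I)Φ⁺⟩ = (1 + Σ_{i=1}^{d-1} x_i²)/d, and the supremum is attained. -/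
open Matrix Kronecker BigOperators Finset

noncomputable section

/-- Standard basis vector `|i⟩⊗|j⟩` of `ℂ^d ⊗ ℂ^d`. -/
def stdVec (d : ℕ) (i j : Fin d) : Fin d × Fin d → ℂ := fun p => if p = (i, j) then 1 else 0

/-- The nonmaximally entangled input state
`|ψ'⟩ = (|00⟩ + Σ_{i≠0} xᵢ|ii⟩)/√(1 + Σ_{i≠0} xᵢ²)`. -/
def psiPrime (d : ℕ) [NeZero d] (x : Fin d → ℝ) : Fin d × Fin d → ℂ :=
  ((Real.sqrt (1 + ∑ i ∈ Finset.univ.erase (0 : Fin d), (x i) ^ 2) : ℝ) : ℂ)⁻¹ •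
    (stdVec d 0 0 + ∑ i ∈ Finset.univ.erase (0 : Fin d), (x i : ℂ) • stdVec d i i)

end

/-! For a Kraus family the integrand `⟨Φ_W|ρ_{ψ',Ω}|Φ_W⟩` is the sum of the squared amplitudes
`|⟨Φ_W|(I ⊗ Aₘ)|ψ'⟩|²`. With `N = Σᵢ xᵢ²` (so `x₀ = 1` gives `N ≥ 1`) these amplitudes are
`Σᵢ xᵢ² W̄ᵢᵢ / √(N d)` for `m = 0` and `xₘ √(1 - xₘ²) W̄ₘ₀ / √(N d)` otherwise. By Cauchy–Schwarz
the first squared amplitude is at most `N Σᵢ xᵢ² |Wᵢᵢ|² / (N d)`, each other one at most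
`N xₘ² |Wₘ₀|² / (N d)`, and `|Wₘₘ|² + |Wₘ₀|² ≤ 1` in every row `m ≠ 0` of a unitary; so the total
is at most `N² / (N d) = N / d`, which `W = 1` attains. -/

open Complex

theorem dotProduct_mul_vecMulVec_mul_conjTranspose_mulVec {𝕜 n m : Type*} [RCLike 𝕜]
    [Fintype n] [Fintype m] (A : Matrix m n 𝕜) (ψ : n → 𝕜) (v : m → 𝕜) :
    star v ⬝ᵥ (A * vecMulVec ψ (star ψ) * Aᴴ) *ᵥ v = (‖star v ⬝ᵥ A *ᵥ ψ‖ : 𝕜) ^ 2 := by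
  rw [mul_vecMulVec, vecMulVec_mul, ← star_mulVec, vecMulVec_mulVec, op_smul_eq_smul,
    dotProduct_smul, smul_eq_mul, star_dotProduct, RCLike.star_def, mul_comm, RCLike.mul_conj]

theorem dotProduct_outChannel_mulVec (d : ℕ) {ι : Type*} [Fintype ι]
    (K : ι → Matrix (Fin d) (Fin d) ℂ) (ψ v : Fin d × Fin d → ℂ) :
    star v ⬝ᵥ outChannel d K ψ *ᵥ v
      = ((∑ m, ‖star v ⬝ᵥ (1 ⊗ₖ K m) *ᵥ ψ‖ ^ 2 : ℝ) : ℂ) := by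
  have hadj (m : ι) : (1 : Matrix (Fin d) (Fin d) ℂ) ⊗ₖ (K m)ᴴ = (1 ⊗ₖ K m)ᴴ := by
    rw [conjTranspose_kronecker, conjTranspose_one]
  simp only [outChannel, sum_mulVec, dotProduct_sum, hadj,
    dotProduct_mul_vecMulVec_mul_conjTranspose_mulVec]
  push_cast
  rfl

theorem sum_norm_sq_row_of_mem_unitaryGroup {n : Type*} [Fintype n] [DecidableEq n]
    {W : Matrix n n ℂ} (hW : W ∈ unitaryGroup n ℂ) (i : n) : ∑ j, ‖W i j‖ ^ 2 = 1 := by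
  have h := congr_fun (congr_fun (mem_unitaryGroup_iff.mp hW) i) i
  simp only [mul_apply, one_apply_eq, star_apply, RCLike.star_def, Complex.mul_conj'] at h
  exact_mod_cast h

theorem norm_sum_sq_mul_sq_le {ι : Type*} (s : Finset ι) (x : ι → ℝ) (a : ι → ℂ) :
    ‖∑ i ∈ s, (x i ^ 2 : ℂ) * a i‖ ^ 2 ≤ (∑ i ∈ s, x i ^ 2) * ∑ i ∈ s, x i ^ 2 * ‖a i‖ ^ 2 := by
  have hnorm : ‖∑ i ∈ s, (x i ^ 2 : ℂ) * a i‖ ≤ ∑ i ∈ s, x i ^ 2 * ‖a i‖ :=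
    (norm_sum_le _ _).trans_eq <| sum_congr rfl fun i _ => by
      rw [norm_mul, norm_pow, norm_real, Real.norm_eq_abs, sq_abs]
  calc ‖∑ i ∈ s, (x i ^ 2 : ℂ) * a i‖ ^ 2 ≤ (∑ i ∈ s, x i ^ 2 * ‖a i‖) ^ 2 := by gcongr
    _ ≤ (∑ i ∈ s, x i ^ 2) * ∑ i ∈ s, x i ^ 2 * ‖a i‖ ^ 2 :=
      sum_sq_le_sum_mul_sum_of_sq_le_mul s (fun i _ => sq_nonneg _)
        (fun i _ => by positivity) fun i _ => (by ring : _ = _).le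

theorem one_le_sum_sq {ι : Type*} [Fintype ι] {x : ι → ℝ} {i₀ : ι} (hx0 : x i₀ = 1) :
    1 ≤ ∑ i, x i ^ 2 := by
  simpa [hx0] using single_le_sum (fun i _ => sq_nonneg (x i)) (mem_univ i₀)

theorem norm_sq_diag_add_sum_norm_sq_column_le {n : Type*} [Fintype n] [DecidableEq n]
    {W : Matrix n n ℂ} (hW : W ∈ unitaryGroup n ℂ) (i₀ : n) (x s : n → ℝ)
    (hx : 1 ≤ ∑ i, x i ^ 2) (hs : ∀ m, |s m| ≤ 1) :
    ‖∑ i, (x i ^ 2 : ℂ) * star (W i i)‖ ^ 2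
        + ∑ m ∈ univ.erase i₀, ‖(x m * s m : ℂ) * star (W m i₀)‖ ^ 2
      ≤ (∑ i, x i ^ 2) ^ 2 := by
  set N := ∑ i, x i ^ 2
  have hrow := sum_norm_sq_row_of_mem_unitaryGroup hW
  have hdiag : ‖W i₀ i₀‖ ^ 2 ≤ 1 :=
    hrow i₀ ▸ single_le_sum (fun j _ => sq_nonneg ‖W i₀ j‖) (mem_univ i₀)
  have hpair (m : n) (hm : m ∈ univ.erase i₀) : ‖W m m‖ ^ 2 + ‖W m i₀‖ ^ 2 ≤ 1 := by
    rw [← hrow m, ← sum_pair (f := fun j => ‖W m j‖ ^ 2) (ne_of_mem_erase hm)]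
    exact sum_le_sum_of_subset_of_nonneg (subset_univ _) fun j _ _ => sq_nonneg _
  have htail (m : n) : ‖(x m * s m : ℂ) * star (W m i₀)‖ ^ 2 ≤ N * (x m ^ 2 * ‖W m i₀‖ ^ 2) := by
    have hs2 : s m ^ 2 ≤ 1 := sq_le_one_iff_abs_le_one _ |>.mpr (hs m)
    rw [norm_mul, norm_mul, norm_star, norm_real, norm_real, Real.norm_eq_abs, Real.norm_eq_abs,
      mul_pow, mul_pow, sq_abs, sq_abs]
    calc x m ^ 2 * s m ^ 2 * ‖W m i₀‖ ^ 2 = s m ^ 2 * (x m ^ 2 * ‖W m i₀‖ ^ 2) := by ring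
      _ ≤ N * (x m ^ 2 * ‖W m i₀‖ ^ 2) := by gcongr; exact hs2.trans hx
  have hcs := norm_sum_sq_mul_sq_le univ x fun i => star (W i i)
  simp only [norm_star] at hcs
  calc _ ≤ N * ∑ i, x i ^ 2 * ‖W i i‖ ^ 2 + N * ∑ m ∈ univ.erase i₀, x m ^ 2 * ‖W m i₀‖ ^ 2 :=
        add_le_add hcs (by rw [mul_sum]; exact sum_le_sum fun m _ => htail m)
    _ = N * (x i₀ ^ 2 * ‖W i₀ i₀‖ ^ 2
          + ∑ m ∈ univ.erase i₀, x m ^ 2 * (‖W m m‖ ^ 2 + ‖W m i₀‖ ^ 2)) := by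
        rw [← add_sum_erase _ _ (mem_univ i₀)]
        simp only [mul_add, sum_add_distrib]
        ring
    _ ≤ N * (x i₀ ^ 2 * 1 + ∑ m ∈ univ.erase i₀, x m ^ 2 * 1) := by
        gcongr with m hm
        exact hpair m hm
    _ = N ^ 2 := by
        simp only [mul_one]
        rw [add_sum_erase univ (fun i => x i ^ 2) (mem_univ i₀), sq]

theorem psiPrime_eq_sum (d : ℕ) [NeZero d] (x : Fin d → ℝ) (hx0 : x 0 = 1) :
    psiPrime d x = ((√(∑ i, x i ^ 2) : ℝ) : ℂ)⁻¹ • ∑ i, (x i : ℂ) • stdVec d i i := by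
  rw [psiPrime, ← add_sum_erase _ _ (mem_univ 0), ← add_sum_erase _ _ (mem_univ 0), hx0]
  simp

theorem dotProduct_kronecker_one_mulVec_stdVec (d : ℕ) (W A : Matrix (Fin d) (Fin d) ℂ)
    (i : Fin d) :
    star ((W ⊗ₖ (1 : Matrix (Fin d) (Fin d) ℂ)) *ᵥ phiPlus d) ⬝ᵥ (1 ⊗ₖ A) *ᵥ stdVec d i i
      = ((√d)⁻¹ : ℝ) * ∑ j, star (W i j) * A j i := by
  simp only [dotProduct, Pi.star_apply, mulVec, kroneckerMap_apply, one_apply, mul_ite, mul_one,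
    mul_zero, phiPlus, ofReal_inv, ite_mul, zero_mul, Fintype.sum_prod_type, sum_ite_eq, mem_univ,
    ↓reduceIte, star_mul', RCLike.star_def, star_inv₀, conj_ofReal, one_mul, stdVec, sum_ite_eq',
    sum_ite_irrel, sum_const_zero, mul_sum]
  exact sum_congr rfl fun j _ => by ring

theorem dotProduct_kronecker_one_mulVec_psiPrime (d : ℕ) [NeZero d] (x : Fin d → ℝ)
    (hx0 : x 0 = 1) (W A : Matrix (Fin d) (Fin d) ℂ) :
    star ((W ⊗ₖ (1 : Matrix (Fin d) (Fin d) ℂ)) *ᵥ phiPlus d) ⬝ᵥ (1 ⊗ₖ A) *ᵥ psiPrime d x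
      = (((√(∑ i, x i ^ 2))⁻¹ * (√d)⁻¹ : ℝ) : ℂ) * ∑ i, ∑ j, x i * star (W i j) * A j i := by
  simp only [psiPrime_eq_sum d x hx0, mulVec_smul, mulVec_sum, dotProduct_smul, dotProduct_sum,
    dotProduct_kronecker_one_mulVec_stdVec, smul_eq_mul, mul_sum]
  push_cast
  exact sum_congr rfl fun i _ => sum_congr rfl fun j _ => by ring

theorem sum_krausA_zero (d : ℕ) [NeZero d] (x : Fin d → ℝ) (W : Matrix (Fin d) (Fin d) ℂ) :
    ∑ i, ∑ j, x i * star (W i j) * krausA d x 0 j i = ∑ i, (x i ^ 2 : ℂ) * star (W i i) := by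
  simp only [krausA, ↓reduceIte, diagonal_apply, mul_ite, mul_zero, sum_ite_eq', mem_univ]
  exact sum_congr rfl fun i _ => by ring

theorem sum_krausA_of_ne_zero (d : ℕ) [NeZero d] (x : Fin d → ℝ) (W : Matrix (Fin d) (Fin d) ℂ)
    {m : Fin d} (hm : m ≠ 0) :
    ∑ i, ∑ j, x i * star (W i j) * krausA d x m j i
      = x m * √(1 - x m ^ 2) * star (W m 0) := by
  simp only [krausA, hm, ↓reduceIte, ite_and, of_apply, mul_ite, mul_zero, sum_ite_eq', mem_univ]
  ring

theorem re_dotProduct_outChannel_psiPrime (d : ℕ) [NeZero d] (x : Fin d → ℝ) (hx0 : x 0 = 1)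
    (W : Matrix (Fin d) (Fin d) ℂ) :
    (star ((W ⊗ₖ (1 : Matrix (Fin d) (Fin d) ℂ)) *ᵥ phiPlus d) ⬝ᵥ
        outChannel d (krausA d x) (psiPrime d x) *ᵥ
          ((W ⊗ₖ (1 : Matrix (Fin d) (Fin d) ℂ)) *ᵥ phiPlus d)).re
      = (‖∑ i, (x i ^ 2 : ℂ) * star (W i i)‖ ^ 2
          + ∑ m ∈ univ.erase 0, ‖(x m * √(1 - x m ^ 2) : ℂ) * star (W m 0)‖ ^ 2)
        / ((∑ i, x i ^ 2) * d) := by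
  have hN : 0 ≤ ∑ i, x i ^ 2 := sum_nonneg fun i _ => sq_nonneg _
  have hscale (z : ℂ) : ‖(((√(∑ i, x i ^ 2))⁻¹ * (√d)⁻¹ : ℝ) : ℂ) * z‖ ^ 2
      = ‖z‖ ^ 2 / ((∑ i, x i ^ 2) * d) := by
    rw [norm_mul, mul_pow, norm_real, Real.norm_eq_abs, sq_abs, mul_pow, inv_pow, inv_pow,
      Real.sq_sqrt hN, Real.sq_sqrt d.cast_nonneg, div_eq_inv_mul, mul_inv]
  rw [dotProduct_outChannel_mulVec, ofReal_re, ← add_sum_erase _ _ (mem_univ 0)]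
  simp only [dotProduct_kronecker_one_mulVec_psiPrime d x hx0, hscale, ← sum_div, ← add_div,
    sum_krausA_zero]
  congr 2
  exact sum_congr rfl fun m hm => by rw [sum_krausA_of_ne_zero d x W (ne_of_mem_erase hm)]

theorem re_dotProduct_outChannel_psiPrime_one (d : ℕ) [NeZero d] (x : Fin d → ℝ)
    (hx0 : x 0 = 1) :
    (star (((1 : Matrix (Fin d) (Fin d) ℂ) ⊗ₖ (1 : Matrix (Fin d) (Fin d) ℂ)) *ᵥ phiPlus d) ⬝ᵥ
        outChannel d (krausA d x) (psiPrime d x) *ᵥ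
          (((1 : Matrix (Fin d) (Fin d) ℂ) ⊗ₖ (1 : Matrix (Fin d) (Fin d) ℂ)) *ᵥ phiPlus d)).re
      = (∑ i, x i ^ 2) / d := by
  have hN : 0 < ∑ i, x i ^ 2 := zero_lt_one.trans_le (one_le_sum_sq hx0)
  have htail : ∀ m ∈ univ.erase (0 : Fin d),
      ‖(x m * √(1 - x m ^ 2) : ℂ) * star ((1 : Matrix (Fin d) (Fin d) ℂ) m 0)‖ ^ 2 = 0 :=
    fun m hm => by
      rw [one_apply_ne (ne_of_mem_erase hm), star_zero, mul_zero, norm_zero, sq, zero_mul]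
  have hdiag : ∑ i, (x i ^ 2 : ℂ) * star ((1 : Matrix (Fin d) (Fin d) ℂ) i i)
      = ((∑ i, x i ^ 2 : ℝ) : ℂ) := by
    push_cast
    simp only [one_apply_eq, star_one, mul_one]
  rw [re_dotProduct_outChannel_psiPrime d x hx0, sum_eq_zero htail, add_zero, hdiag, norm_real,
    Real.norm_of_nonneg hN.le, sq, mul_div_mul_left _ _ hN.ne']

theorem re_dotProduct_outChannel_psiPrime_le (d : ℕ) [NeZero d] (x : Fin d → ℝ)
    (hx0 : x 0 = 1) {W : Matrix (Fin d) (Fin d) ℂ} (hW : W ∈ unitaryGroup (Fin d) ℂ) :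
    (star ((W ⊗ₖ (1 : Matrix (Fin d) (Fin d) ℂ)) *ᵥ phiPlus d) ⬝ᵥ
        outChannel d (krausA d x) (psiPrime d x) *ᵥ
          ((W ⊗ₖ (1 : Matrix (Fin d) (Fin d) ℂ)) *ᵥ phiPlus d)).re
      ≤ (∑ i, x i ^ 2) / d := by
  have hN1 := one_le_sum_sq hx0
  have hs (m : Fin d) : |√(1 - x m ^ 2)| ≤ 1 := by
    rw [abs_of_nonneg (Real.sqrt_nonneg _), Real.sqrt_le_one]
    exact sub_le_self _ (sq_nonneg _)
  rw [re_dotProduct_outChannel_psiPrime d x hx0]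
  calc _ ≤ (∑ i, x i ^ 2) ^ 2 / ((∑ i, x i ^ 2) * d) := by
        gcongr
        exact norm_sq_diag_add_sum_norm_sq_column_le hW 0 x _ hN1 hs
    _ = (∑ i, x i ^ 2) / d := by
        rw [sq, mul_div_mul_left _ _ (zero_lt_one.trans_le hN1).ne']

theorem singlet_fraction_psiPrime_general (d : ℕ) [NeZero d] (x : Fin d → ℝ)
    (hx0 : x 0 = 1) :
    IsGreatest
      {r : ℝ | ∃ W ∈ Matrix.unitaryGroup (Fin d) ℂ,
        r = (star ((W ⊗ₖ (1 : Matrix (Fin d) (Fin d) ℂ)).mulVec (phiPlus d)) ⬝ᵥ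
              (outChannel d (krausA d x) (psiPrime d x)).mulVec
                ((W ⊗ₖ (1 : Matrix (Fin d) (Fin d) ℂ)).mulVec (phiPlus d))).re}
      ((1 + ∑ i ∈ Finset.univ.erase (0 : Fin d), (x i) ^ 2) / d) := by
  have hN : 1 + ∑ i ∈ univ.erase (0 : Fin d), x i ^ 2 = ∑ i, x i ^ 2 := by
    rw [← add_sum_erase _ _ (mem_univ 0), hx0, one_pow]
  rw [hN]
  exact ⟨⟨1, one_mem _, (re_dotProduct_outChannel_psiPrime_one d x hx0).symm⟩,
    fun r ⟨W, hW, hr⟩ => hr ▸ re_dotProduct_outChannel_psiPrime_le d x hx0 hW⟩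

/-- Lemma 4, quantitative form: the singlet fraction of `ρ_{ψ',Ω}` — the
supremum over unitaries `W` of `⟨(W⊗I)Φ⁺| ρ_{ψ',Ω} |(W⊗I)Φ⁺⟩` — equals
`(1 + Σ_{i≠0} xᵢ²)/d`, and the supremum is attained. -/
theorem singlet_fraction_psiPrime (d : ℕ) [NeZero d] (hd : 3 ≤ d) (x : Fin d → ℝ)
    (hx0 : x 0 = 1) (hx : ∀ i : Fin d, i ≠ 0 → 0 < x i ∧ x i < 1) :
    IsGreatest
      {r : ℝ | ∃ W ∈ Matrix.unitaryGroup (Fin d) ℂ,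
        r = (star ((W ⊗ₖ (1 : Matrix (Fin d) (Fin d) ℂ)).mulVec (phiPlus d)) ⬝ᵥ
              (outChannel d (krausA d x) (psiPrime d x)).mulVec
                ((W ⊗ₖ (1 : Matrix (Fin d) (Fin d) ℂ)).mulVec (phiPlus d))).re}
      ((1 + ∑ i ∈ Finset.univ.erase (0 : Fin d), (x i) ^ 2) / d) :=
  singlet_fraction_psiPrime_general d x hx0
end
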